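/- arXiv:2206.13111 — 4 statements merged into one kernel-verified Lean document; each statement's English description precedes it below -/
import Mathlib

section
/- On every contact manifold (M,λ) there exists a contact connection, i.e., a symmetric (torsion-free) affine connection ∇ satisfying ∇_X ω = 0 and ∇_X ξ = 0 for all vector fields X. -/
/-!
# Existence of contact connections

We work in the algebraic (Koszul-style) model of differential geometry: a smooth
manifold `M` is represented by its commutative ℝ-algebra `A = C^∞(M)`, vector
fields by ℝ-linear derivations of `A`, one-forms by `A`-linear functionals on
vector fields.

A contact manifold `(M, λ)` (`M` of odd dimension `n = 2m+1`, `λ` a one-form with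
`λ ∧ (dλ)^m` a volume form) is encoded by the structure `ContactAlg`: it carries
the contact form `λ`, the Reeb field `ξ` (`i_ξ dλ = 0`, `λ(ξ) = 1`) and the
canonical bivector `π` (via the musical map `♯`, characterized by
`π^{ik}ω_{kj} = δ^i_j − λ_j ξ^i` and `λ_i π^{ij} = 0`, `ω = dλ`).

STATEMENT 0: On every contact manifold `(M, λ)` there exists a contact
connection, i.e. a symmetric (torsion-free) affine connection `∇` satisfying
`∇_X ω = 0` and `∇_X ξ = 0` for all vector fields `X`.
-/

noncomputable section

/-- Vector fields: ℝ-linear derivations of the function algebra `A`. -/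
abbrev Vec (A : Type*) [CommRing A] [Algebra ℝ A] := Derivation ℝ A A

/-- `α : Vec A → A` is a one-form if it is `A`-linear. -/
def IsOneForm {A : Type*} [CommRing A] [Algebra ℝ A] (α : Vec A → A) : Prop :=
  (∀ X Y : Vec A, α (X + Y) = α X + α Y) ∧ ∀ (f : A) (X : Vec A), α (f • X) = f * α X

/-- The differential of a function, `df(X) = X f`. -/
def dF {A : Type*} [CommRing A] [Algebra ℝ A] (f : A) : Vec A → A := fun X => X f

/-- Exterior differential of a one-form: `dλ(X,Y) = Xλ(Y) − Yλ(X) − λ([X,Y])`. -/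
def d1 {A : Type*} [CommRing A] [Algebra ℝ A] (lam : Vec A → A) (X Y : Vec A) : A :=
  X (lam Y) - Y (lam X) - lam ⁅X, Y⁆

/-- A contact manifold `(M, λ)` of dimension `2m+1`, presented algebraically:
`λ` is the contact one-form, `ξ` the Reeb vector field, `♯` the musical map of
the canonical bivector `π` (so `π(α,β) = β(♯α)`), and `ω = dλ`. -/
structure ContactAlg (A : Type*) [CommRing A] [Algebra ℝ A] where
  /-- `dim M = 2m + 1` -/
  m : ℕ
  /-- the contact one-form `λ` -/
  lam : Vec A → A
  lam_isForm : IsOneForm lam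
  /-- the Reeb vector field `ξ` -/
  xi : Vec A
  /-- `i_ξ λ = 1` -/
  lam_xi : lam xi = 1
  /-- `i_ξ ω = 0` for `ω = dλ` -/
  reeb : ∀ X : Vec A, d1 lam xi X = 0
  /-- the musical map `α ↦ ♯α`, `(♯α)^j = α_i π^{ij}`, of the canonical bivector `π` -/
  sharp : (Vec A → A) → Vec A
  sharp_add : ∀ α β : Vec A → A, sharp (fun X => α X + β X) = sharp α + sharp β
  sharp_smul : ∀ (f : A) (α : Vec A → A), sharp (fun X => f * α X) = f • sharp α
  /-- `λ_i π^{ij} = 0` -/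
  sharp_lam : sharp lam = 0
  /-- `π^{ik} ω_{kj} = δ^i_j − λ_j ξ^i` -/
  sharp_omega : ∀ α : Vec A → A, IsOneForm α →
    ∀ X : Vec A, d1 lam (sharp α) X = α X - α xi * lam X
  /-- antisymmetry of the bivector `π` -/
  sharp_skew : ∀ α β : Vec A → A, IsOneForm α → IsOneForm β →
    β (sharp α) = - α (sharp β)

/-- A contact connection on the contact manifold `(M, λ)`: a symmetric
(torsion-free) affine connection `∇` with `∇_X ω = 0` and `∇_X ξ = 0`. -/
structure ContactConnection {A : Type*} [CommRing A] [Algebra ℝ A]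
    (Cst : ContactAlg A) where
  /-- the covariant derivative `(X, Y) ↦ ∇_X Y` -/
  cov : Vec A → Vec A → Vec A
  add_left : ∀ X Y Z : Vec A, cov (X + Y) Z = cov X Z + cov Y Z
  smul_left : ∀ (f : A) (X Y : Vec A), cov (f • X) Y = f • cov X Y
  add_right : ∀ X Y Z : Vec A, cov X (Y + Z) = cov X Y + cov X Z
  /-- the Leibniz rule `∇_X (fY) = (Xf)Y + f ∇_X Y` -/
  leibniz : ∀ (X : Vec A) (f : A) (Y : Vec A), cov X (f • Y) = X f • Y + f • cov X Y
  /-- symmetry (torsion-freeness): `∇_X Y − ∇_Y X = [X,Y]` -/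
  torsion_free : ∀ X Y : Vec A, cov X Y - cov Y X = ⁅X, Y⁆
  /-- `∇_X ω = 0` for `ω = dλ` -/
  parallel_omega : ∀ X Y Z : Vec A,
    X (d1 Cst.lam Y Z) = d1 Cst.lam (cov X Y) Z + d1 Cst.lam Y (cov X Z)
  /-- `∇_X ξ = 0` -/
  parallel_xi : ∀ X : Vec A, cov X Cst.xi = 0

namespace CC

variable {A : Type*} [CommRing A] [Algebra ℝ A] (C : ContactAlg A)

/-- applications of derivations -/
lemma ap_smul (f : A) (X : Vec A) (a : A) : (f • X) a = f * X a := by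
  rw [Derivation.smul_apply, smul_eq_mul]

lemma ap_add (X Y : Vec A) (a : A) : (X + Y) a = X a + Y a := by simp

lemma ap_mul (X : Vec A) (a b : A) : X (a * b) = a * X b + b * X a := by
  rw [Derivation.leibniz, smul_eq_mul, smul_eq_mul]

lemma lam_add (X Y : Vec A) : C.lam (X + Y) = C.lam X + C.lam Y := C.lam_isForm.1 X Y

lemma lam_smul (f : A) (X : Vec A) : C.lam (f • X) = f * C.lam X := C.lam_isForm.2 f X

lemma lam_zero : C.lam 0 = 0 := by
  have := lam_smul C (0 : A) 0
  simpa using this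

lemma lam_neg (X : Vec A) : C.lam (-X) = - C.lam X := by
  have h : (-X : Vec A) = (-1 : A) • X := by rw [neg_one_smul]
  rw [h, lam_smul]; ring

lemma lam_sub (X Y : Vec A) : C.lam (X - Y) = C.lam X - C.lam Y := by
  rw [sub_eq_add_neg, lam_add, lam_neg]; ring

/-- bracket Leibniz rules -/
lemma lie_smul_right (f : A) (X Y : Vec A) : ⁅X, f • Y⁆ = f • ⁅X, Y⁆ + (X f) • Y := by
  apply Derivation.ext; intro a
  simp only [Derivation.commutator_apply, ap_smul, ap_add, ap_mul]
  ring

lemma lie_smul_left (f : A) (X Y : Vec A) : ⁅f • X, Y⁆ = f • ⁅X, Y⁆ - (Y f) • X := by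
  apply Derivation.ext; intro a
  simp only [Derivation.commutator_apply, ap_smul, ap_mul, Derivation.sub_apply]
  ring

/-- omega -/
def om (X Y : Vec A) : A := d1 C.lam X Y

lemma om_def (X Y : Vec A) : om C X Y = X (C.lam Y) - Y (C.lam X) - C.lam ⁅X, Y⁆ := rfl

lemma om_antisymm (X Y : Vec A) : om C X Y = - om C Y X := by
  have h : ⁅Y, X⁆ = -⁅X, Y⁆ := by rw [← lie_skew]
  simp only [om_def, h, lam_neg]; ring

lemma om_add_left (X Y Z : Vec A) : om C (X + Y) Z = om C X Z + om C Y Z := by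
  simp only [om_def, add_lie, lam_add, ap_add, map_add]; ring

lemma om_add_right (X Y Z : Vec A) : om C X (Y + Z) = om C X Y + om C X Z := by
  simp only [om_def, lie_add, lam_add, ap_add, map_add]; ring

lemma om_smul_left (f : A) (X Y : Vec A) : om C (f • X) Y = f * om C X Y := by
  simp only [om_def, lie_smul_left, ap_smul, lam_smul, lam_sub, lam_add, ap_mul]
  ring

lemma om_smul_right (f : A) (X Y : Vec A) : om C X (f • Y) = f * om C X Y := by
  simp only [om_def, lie_smul_right, ap_smul, lam_smul, lam_add, ap_mul]
  ring

lemma om_xi_left (X : Vec A) : om C C.xi X = 0 := C.reeb X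

lemma om_xi_right (X : Vec A) : om C X C.xi = 0 := by
  rw [om_antisymm, om_xi_left]; ring

lemma om_zero_left (X : Vec A) : om C 0 X = 0 := by
  have h : (0 : Vec A) = (0 : A) • (0 : Vec A) := by simp
  rw [h, om_smul_left]; ring

lemma om_zero_right (X : Vec A) : om C X 0 = 0 := by
  rw [om_antisymm, om_zero_left]; ring

/-- one-form facts -/
lemma form_zero {a : Vec A → A} (ha : IsOneForm a) : a 0 = 0 := by
  have := ha.2 (0 : A) 0
  simpa using this

lemma form_neg {a : Vec A → A} (ha : IsOneForm a) (X : Vec A) : a (-X) = - a X := by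
  have h : (-X : Vec A) = (-1 : A) • X := by rw [neg_one_smul]
  rw [h, ha.2]; ring

lemma form_sub {a : Vec A → A} (ha : IsOneForm a) (X Y : Vec A) :
    a (X - Y) = a X - a Y := by
  rw [sub_eq_add_neg, ha.1, form_neg ha]; ring

/-- al Y = i_Y omega -/
def al (Y : Vec A) : Vec A → A := fun Z => om C Y Z

lemma al_apply (Y Z : Vec A) : al C Y Z = om C Y Z := rfl

lemma al_form (Y : Vec A) : IsOneForm (al C Y) :=
  ⟨fun X Z => om_add_right C Y X Z, fun f Z => om_smul_right C f Y Z⟩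

lemma al_xi_apply (Y : Vec A) : al C Y C.xi = 0 := om_xi_right C Y

lemma al_xi : al C C.xi = fun _ => (0 : A) := by
  funext Z; exact om_xi_left C Z

lemma al_smul (f : A) (Y : Vec A) : al C (f • Y) = fun Z => f * al C Y Z := by
  funext Z; exact om_smul_left C f Y Z

lemma al_add (X Y : Vec A) : al C (X + Y) = fun Z => al C X Z + al C Y Z := by
  funext Z; exact om_add_left C X Y Z

/-- sharp facts -/
lemma sh_add (φ ψ : Vec A → A) :
    C.sharp (fun Z => φ Z + ψ Z) = C.sharp φ + C.sharp ψ := C.sharp_add φ ψ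

lemma sh_smul (f : A) (φ : Vec A → A) :
    C.sharp (fun Z => f * φ Z) = f • C.sharp φ := C.sharp_smul f φ

lemma sh_zero : C.sharp (fun _ => (0 : A)) = 0 := by
  have h : (fun Z : Vec A => (0:A) * (fun _ => (0:A)) Z) = (fun _ : Vec A => (0:A)) := by
    funext Z; ring
  have := C.sharp_smul (0 : A) (fun _ => (0:A))
  rw [h] at this
  simpa using this

lemma sh_sub (φ ψ : Vec A → A) :
    C.sharp (fun Z => φ Z - ψ Z) = C.sharp φ - C.sharp ψ := by
  have h : (fun Z => φ Z - ψ Z) = (fun Z => φ Z + (-1 : A) * ψ Z) := by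
    funext Z; ring
  rw [h, sh_add, sh_smul, neg_one_smul, ← sub_eq_add_neg]

lemma om_sharp {a : Vec A → A} (ha : IsOneForm a) (Z : Vec A) :
    om C (C.sharp a) Z = a Z - a C.xi * C.lam Z := C.sharp_omega a ha Z

lemma om_sharp₀ {a : Vec A → A} (ha : IsOneForm a) (hxi : a C.xi = 0) (Z : Vec A) :
    om C (C.sharp a) Z = a Z := by
  rw [om_sharp C ha, hxi]; ring

lemma dF_form (f : A) : IsOneForm (dF (A := A) f) := by
  constructor
  · intro X Y; simp [dF]
  · intro g X; simp [dF, ap_smul]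

/-- P = id : sharp (al Y) = Y - lam Y • xi -/
lemma sharp_al (Y : Vec A) : C.sharp (al C Y) = Y - C.lam Y • C.xi := by
  apply Derivation.ext; intro f
  have h1 : dF f (C.sharp (al C Y)) = - al C Y (C.sharp (dF f)) :=
    C.sharp_skew (al C Y) (dF f) (al_form C Y) (dF_form f)
  have h2 : al C Y (C.sharp (dF f)) = - om C (C.sharp (dF f)) Y := by
    rw [al_apply, om_antisymm]
  have h3 : om C (C.sharp (dF f)) Y = dF f Y - dF f C.xi * C.lam Y :=
    om_sharp C (dF_form f) Y
  have : (C.sharp (al C Y)) f = Y f - C.xi f * C.lam Y := by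
    have := h1
    rw [h2, h3] at this
    simpa [dF] using this
  rw [this]
  simp only [Derivation.sub_apply, ap_smul]
  ring

/-- d omega = 0 -/
lemma rel (X Y Z : Vec A) :
    X (om C Y Z) - Y (om C X Z) + Z (om C X Y)
      = om C ⁅X, Y⁆ Z - om C ⁅X, Z⁆ Y + om C ⁅Y, Z⁆ X := by
  have hJ : C.lam ⁅⁅X, Y⁆, Z⁆ = C.lam ⁅⁅X, Z⁆, Y⁆ - C.lam ⁅⁅Y, Z⁆, X⁆ := by
    have h : ⁅⁅X, Y⁆, Z⁆ = ⁅⁅X, Z⁆, Y⁆ - ⁅⁅Y, Z⁆, X⁆ := by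
      rw [lie_lie, ← lie_skew ⁅X, Z⁆ Y, ← lie_skew ⁅Y, Z⁆ X]
      abel
    rw [h, lam_sub]
  simp only [om_def, Derivation.commutator_apply, map_sub]
  rw [hJ]; ring

/-- scalar constants -/
def hA : A := algebraMap ℝ A (2⁻¹ : ℝ)
def tA : A := algebraMap ℝ A (3⁻¹ : ℝ)

lemma hA_two : (hA : A) + hA = 1 := by
  rw [hA, ← map_add]; norm_num

lemma tA_three : (tA : A) + tA + tA = 1 := by
  rw [tA, ← map_add, ← map_add]; norm_num

lemma ap_hA_mul (X : Vec A) (g : A) : X ((hA : A) * g) = hA * X g := by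
  rw [ap_mul]; simp [hA]

lemma ap_tA_mul (X : Vec A) (g : A) : X ((tA : A) * g) = tA * X g := by
  rw [ap_mul]; simp [tA]

/-- X ∘ a -/
def Xc (X : Vec A) (a : Vec A → A) : Vec A → A := fun Z => X (a Z)

/-- the bilinear scalar F_X(a,b) -/
def Ff (X : Vec A) (a b : Vec A → A) : A :=
  b (C.sharp (Xc X a)) - a (C.sharp (Xc X b)) - X (b (C.sharp a))

/-- the covariant derivative on one-forms -/
def Dm (X : Vec A) (a : Vec A → A) : Vec A → A :=
  fun Z => om C (C.sharp (Xc X a)) Z + hA * Ff C X a (al C Z)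

lemma Ff_antisymm {a b : Vec A → A} (ha : IsOneForm a) (hb : IsOneForm b) (X : Vec A) :
    Ff C X a b = - Ff C X b a := by
  have hsk : b (C.sharp a) = - a (C.sharp b) := C.sharp_skew a b ha hb
  have hX : X (b (C.sharp a)) = - X (a (C.sharp b)) := by rw [hsk, map_neg]
  simp only [Ff, hX]; ring

lemma Xc_zero (X : Vec A) : Xc X (fun _ => (0:A)) = fun _ => (0:A) := by
  funext Z; simp [Xc]

lemma Ff_zero_b {a : Vec A → A} (ha : IsOneForm a) (X : Vec A) :
    Ff C X a (fun _ => (0:A)) = 0 := by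
  simp only [Ff, Xc_zero, sh_zero]
  rw [form_zero ha]
  simp

lemma Dm_xi {a : Vec A → A} (ha : IsOneForm a) (X : Vec A) : Dm C X a C.xi = 0 := by
  simp only [Dm]
  rw [om_xi_right, al_xi, Ff_zero_b C ha]
  ring

lemma Xc_smulX (f : A) (X : Vec A) (a : Vec A → A) :
    Xc (f • X) a = fun U => f * Xc X a U := by
  funext U; simp [Xc, ap_smul]

lemma Xc_addX (X X' : Vec A) (a : Vec A → A) :
    Xc (X + X') a = fun U => Xc X a U + Xc X' a U := by
  funext U; simp [Xc]

/-- Leibniz expansion of X ∘ (f a) -/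
lemma sh_Xc_smulA (f : A) (X : Vec A) (a : Vec A → A) :
    C.sharp (Xc X (fun U => f * a U))
      = f • C.sharp (Xc X a) + X f • C.sharp a := by
  have h1 : Xc X (fun U => f * a U)
      = fun U => f * Xc X a U + X f * a U := by
    funext U; simp only [Xc, ap_mul]; ring
  rw [h1]
  have h2 : (fun U => f * Xc X a U + X f * a U)
      = fun U => (fun V => f * Xc X a V) U + (fun V => X f * a V) U := rfl
  rw [h2, sh_add, sh_smul, sh_smul]

lemma Ff_smulX {a b : Vec A → A} (ha : IsOneForm a) (hb : IsOneForm b)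
    (f : A) (X : Vec A) : Ff C (f • X) a b = f * Ff C X a b := by
  simp only [Ff, Xc_smulX, sh_smul, ap_smul]
  rw [ha.2, hb.2]; ring

lemma Ff_addX {a b : Vec A → A} (ha : IsOneForm a) (hb : IsOneForm b)
    (X X' : Vec A) : Ff C (X + X') a b = Ff C X a b + Ff C X' a b := by
  simp only [Ff, Xc_addX, ap_add]
  have h : ∀ c : Vec A → A, (fun U => Xc X c U + Xc X' c U)
      = fun U => (Xc X c) U + (Xc X' c) U := fun c => rfl
  rw [h a, h b, sh_add, sh_add, ha.1, hb.1]; ring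

lemma Ff_smulA {a b : Vec A → A} (ha : IsOneForm a) (hb : IsOneForm b)
    (f : A) (X : Vec A) :
    Ff C X (fun U => f * a U) b = f * Ff C X a b := by
  simp only [Ff]
  have h3 : X (b (C.sharp fun U => f * a U))
      = f * X (b (C.sharp a)) + b (C.sharp a) * X f := by
    rw [sh_smul, hb.2, ap_mul]
  rw [sh_Xc_smulA, hb.1, hb.2, hb.2, h3]
  ring

lemma Ff_smulB {a b : Vec A → A} (ha : IsOneForm a) (hb : IsOneForm b)
    (f : A) (X : Vec A) :
    Ff C X a (fun U => f * b U) = f * Ff C X a b := by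
  have hsk : a (C.sharp b) + b (C.sharp a) = 0 := by
    rw [C.sharp_skew b a hb ha]; ring
  simp only [Ff]
  rw [sh_Xc_smulA, ha.1, ha.2, ha.2, ap_mul]
  linear_combination (-(X f)) * hsk

lemma Ff_addA {a a' b : Vec A → A} (ha : IsOneForm a) (ha' : IsOneForm a')
    (hb : IsOneForm b) (X : Vec A) :
    Ff C X (fun U => a U + a' U) b = Ff C X a b + Ff C X a' b := by
  simp only [Ff]
  have h1 : Xc X (fun U => a U + a' U) = fun U => (Xc X a) U + (Xc X a') U := by
    funext U; simp [Xc]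
  have h2 : (fun U => a U + a' U) (C.sharp (Xc X b))
      = a (C.sharp (Xc X b)) + a' (C.sharp (Xc X b)) := rfl
  have h3 : X (b (C.sharp fun U => a U + a' U))
      = X (b (C.sharp a)) + X (b (C.sharp a')) := by
    rw [sh_add, hb.1, map_add]
  rw [h1, sh_add, hb.1, h3]
  ring

lemma Ff_addB {a b b' : Vec A → A} (ha : IsOneForm a) (hb : IsOneForm b)
    (hb' : IsOneForm b') (X : Vec A) :
    Ff C X a (fun U => b U + b' U) = Ff C X a b + Ff C X a b' := by
  simp only [Ff]
  have h1 : Xc X (fun U => b U + b' U) = fun U => (Xc X b) U + (Xc X b') U := by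
    funext U; simp [Xc]
  rw [h1, sh_add, ha.1, map_add]; ring

/-- Dm: module properties -/
lemma Dm_smulX {a : Vec A → A} (ha : IsOneForm a) (f : A) (X Z : Vec A) :
    Dm C (f • X) a Z = f * Dm C X a Z := by
  simp only [Dm]
  rw [Xc_smulX, sh_smul, om_smul_left, Ff_smulX C ha (al_form C Z)]
  ring

lemma Dm_addX {a : Vec A → A} (ha : IsOneForm a) (X X' Z : Vec A) :
    Dm C (X + X') a Z = Dm C X a Z + Dm C X' a Z := by
  simp only [Dm]
  have h : Xc (X + X') a = fun U => (Xc X a) U + (Xc X' a) U := by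
    funext U; simp [Xc]
  rw [h, sh_add, om_add_left, Ff_addX C ha (al_form C Z)]
  ring

lemma Dm_leib {a : Vec A → A} (ha : IsOneForm a) (hxi : a C.xi = 0)
    (f : A) (X Z : Vec A) :
    Dm C X (fun U => f * a U) Z = f * Dm C X a Z + X f * a Z := by
  simp only [Dm]
  rw [sh_Xc_smulA, om_add_left, om_smul_left, om_smul_left,
    om_sharp₀ C ha hxi, Ff_smulA C ha (al_form C Z)]
  ring

lemma Dm_addA {a a' : Vec A → A} (ha : IsOneForm a) (ha' : IsOneForm a')
    (X Z : Vec A) :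
    Dm C X (fun U => a U + a' U) Z = Dm C X a Z + Dm C X a' Z := by
  simp only [Dm]
  have h1 : Xc X (fun U => a U + a' U) = fun U => (Xc X a) U + (Xc X a') U := by
    funext U; simp [Xc]
  rw [h1, sh_add, om_add_left, Ff_addA C ha ha' (al_form C Z)]
  ring

lemma Dm_smulZ {a : Vec A → A} (ha : IsOneForm a) (f : A) (X Z : Vec A) :
    Dm C X a (f • Z) = f * Dm C X a Z := by
  simp only [Dm]
  rw [om_smul_right, al_smul, Ff_smulB C ha (al_form C Z)]
  ring

lemma Dm_addZ {a : Vec A → A} (ha : IsOneForm a) (X Z Z' : Vec A) :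
    Dm C X a (Z + Z') = Dm C X a Z + Dm C X a Z' := by
  simp only [Dm]
  rw [om_add_right, al_add, Ff_addB C ha (al_form C Z) (al_form C Z')]
  ring

/-- THE key pairing identity -/
lemma Dm_pair (X Y Z : Vec A) :
    Dm C X (al C Y) Z - Dm C X (al C Z) Y = X (om C Y Z) := by
  have hanti : Ff C X (al C Z) (al C Y) = - Ff C X (al C Y) (al C Z) :=
    Ff_antisymm C (al_form C Z) (al_form C Y) X
  simp only [Dm]
  rw [hanti]
  have hhalf : om C (C.sharp (Xc X (al C Y))) Z + hA * Ff C X (al C Y) (al C Z)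
      - (om C (C.sharp (Xc X (al C Z))) Y + hA * - Ff C X (al C Y) (al C Z))
      = om C (C.sharp (Xc X (al C Y))) Z - om C (C.sharp (Xc X (al C Z))) Y
        + (hA + hA) * Ff C X (al C Y) (al C Z) := by ring
  rw [hhalf, hA_two, one_mul]
  have hF : Ff C X (al C Y) (al C Z)
      = - om C (C.sharp (Xc X (al C Y))) Z + om C (C.sharp (Xc X (al C Z))) Y
        - X (al C Z (C.sharp (al C Y))) := by
    simp only [Ff]
    have e1 : al C Z (C.sharp (Xc X (al C Y)))
        = - om C (C.sharp (Xc X (al C Y))) Z := by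
      rw [al_apply, om_antisymm]
    have e2 : al C Y (C.sharp (Xc X (al C Z)))
        = - om C (C.sharp (Xc X (al C Z))) Y := by
      rw [al_apply, om_antisymm]
    rw [e1, e2]; ring
  rw [hF]
  have e3 : al C Z (C.sharp (al C Y)) = - om C Y Z := by
    rw [sharp_al]
    have : al C Z (Y - C.lam Y • C.xi) = al C Z Y - C.lam Y * al C Z C.xi := by
      rw [form_sub (al_form C Z), (al_form C Z).2]
    rw [this, al_xi_apply, al_apply, om_antisymm]
    ring
  rw [e3, map_neg]
  ring

lemma om_neg_left (V Z : Vec A) : om C (-V) Z = - om C V Z := by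
  have h : (-V : Vec A) = (-1 : A) • V := by rw [neg_one_smul]
  rw [h, om_smul_left]; ring

lemma om_sub_left (V W Z : Vec A) : om C (V - W) Z = om C V Z - om C W Z := by
  rw [sub_eq_add_neg, om_add_left, om_neg_left]; ring

lemma Ff_zero_a {b : Vec A → A} (hb : IsOneForm b) (X : Vec A) :
    Ff C X (fun _ => (0:A)) b = 0 := by
  simp only [Ff, Xc_zero, sh_zero]
  rw [form_zero hb]
  simp

lemma Dm_zero (X Z : Vec A) : Dm C X (fun _ => (0:A)) Z = 0 := by
  simp only [Dm]
  rw [Xc_zero, sh_zero, om_zero_left, Ff_zero_a C (al_form C Z)]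
  ring

/-- the torsion tensor of the base connection -/
def tt (X Y : Vec A) : Vec A → A :=
  fun Z => Dm C X (al C Y) Z - Dm C Y (al C X) Z - om C ⁅X, Y⁆ Z

lemma tt_xiplug (X Y : Vec A) : tt C X Y C.xi = 0 := by
  simp only [tt]
  rw [Dm_xi C (al_form C Y), Dm_xi C (al_form C X), om_xi_right]
  ring

lemma tt_antisym (X Y Z : Vec A) : tt C Y X Z = - tt C X Y Z := by
  simp only [tt]
  have h : ⁅Y, X⁆ = -⁅X, Y⁆ := by rw [← lie_skew]
  rw [h, om_neg_left]; ring

lemma tt_self (V Z : Vec A) : tt C V V Z = 0 := by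
  simp only [tt]
  rw [lie_self, om_zero_left]; ring

lemma tt_J (X Y Z : Vec A) : tt C X Z Y - tt C Y Z X = tt C X Y Z := by
  simp only [tt]
  linear_combination (-1 : A) * Dm_pair C X Y Z + Dm_pair C Y X Z
    - Dm_pair C Z X Y - rel C X Y Z

lemma uu_symm (X Y : Vec A) : tt C X C.xi Y = tt C Y C.xi X := by
  have h := tt_J C X Y C.xi
  rw [tt_xiplug] at h
  exact sub_eq_zero.mp h

lemma tt_smul1 (f : A) (X Y Z : Vec A) : tt C (f • X) Y Z = f * tt C X Y Z := by
  simp only [tt]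
  rw [Dm_smulX C (al_form C Y), al_smul,
    Dm_leib C (al_form C X) (al_xi_apply C X), lie_smul_left, om_sub_left,
    om_smul_left, om_smul_left, al_apply]
  ring

lemma tt_smul2 (f : A) (X Y Z : Vec A) : tt C X (f • Y) Z = f * tt C X Y Z := by
  rw [tt_antisym, tt_smul1, tt_antisym]; ring

lemma tt_smul3 (f : A) (X Y Z : Vec A) : tt C X Y (f • Z) = f * tt C X Y Z := by
  simp only [tt]
  rw [Dm_smulZ C (al_form C Y), Dm_smulZ C (al_form C X), om_smul_right]
  ring

lemma tt_add1 (X X' Y Z : Vec A) :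
    tt C (X + X') Y Z = tt C X Y Z + tt C X' Y Z := by
  simp only [tt]
  rw [Dm_addX C (al_form C Y), al_add,
    Dm_addA C (al_form C X) (al_form C X'), add_lie, om_add_left]
  ring

lemma tt_add2 (X Y Y' Z : Vec A) :
    tt C X (Y + Y') Z = tt C X Y Z + tt C X Y' Z := by
  rw [tt_antisym, tt_add1, tt_antisym C X Y, tt_antisym C X Y']; ring

lemma tt_add3 (X Y Z Z' : Vec A) :
    tt C X Y (Z + Z') = tt C X Y Z + tt C X Y Z' := by
  simp only [tt]
  rw [Dm_addZ C (al_form C Y), Dm_addZ C (al_form C X), om_add_right]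
  ring

/-- correction term -/
def nu (X Y : Vec A) : Vec A → A := fun Z =>
  tA * (C.lam Y * tt C X C.xi Z + C.lam X * tt C Y C.xi Z - tt C X Y Z - tt C X Z Y)

/-- total sharp argument -/
def mu (X Y : Vec A) : Vec A → A := fun Z => Dm C X (al C Y) Z + nu C X Y Z

/-- xi coefficient -/
def ccoef (X Y : Vec A) : A := X (C.lam Y) - hA * om C X Y

lemma mu_smulZ (f : A) (X Y Z : Vec A) : mu C X Y (f • Z) = f * mu C X Y Z := by
  simp only [mu, nu]
  rw [Dm_smulZ C (al_form C Y)]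
  simp only [tt_smul1, tt_smul2, tt_smul3]
  ring

lemma mu_addZ (X Y Z Z' : Vec A) :
    mu C X Y (Z + Z') = mu C X Y Z + mu C X Y Z' := by
  simp only [mu, nu]
  rw [Dm_addZ C (al_form C Y)]
  simp only [tt_add1, tt_add2, tt_add3]
  ring

lemma mu_form (X Y : Vec A) : IsOneForm (mu C X Y) :=
  ⟨fun Z Z' => mu_addZ C X Y Z Z', fun f Z => mu_smulZ C f X Y Z⟩

lemma mu_smulX (f : A) (X Y Z : Vec A) : mu C (f • X) Y Z = f * mu C X Y Z := by
  simp only [mu, nu]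
  rw [Dm_smulX C (al_form C Y), lam_smul, tt_smul1, tt_smul1, tt_smul1]
  ring

lemma mu_addX (X X' Y Z : Vec A) :
    mu C (X + X') Y Z = mu C X Y Z + mu C X' Y Z := by
  simp only [mu, nu]
  rw [Dm_addX C (al_form C Y), lam_add, tt_add1, tt_add1, tt_add1]
  ring

lemma mu_leibY (f : A) (X Y Z : Vec A) :
    mu C X (f • Y) Z = f * mu C X Y Z + X f * om C Y Z := by
  simp only [mu, nu]
  rw [al_smul, Dm_leib C (al_form C Y) (al_xi_apply C Y), lam_smul,
    tt_smul2, tt_smul3, tt_smul1, al_apply]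
  ring

lemma mu_addY (X Y Y' Z : Vec A) :
    mu C X (Y + Y') Z = mu C X Y Z + mu C X Y' Z := by
  simp only [mu, nu]
  rw [al_add, Dm_addA C (al_form C Y) (al_form C Y'), lam_add,
    tt_add2, tt_add3, tt_add1]
  ring

lemma mu_torsion (X Y Z : Vec A) :
    mu C X Y Z - mu C Y X Z = om C ⁅X, Y⁆ Z := by
  have h1 := tt_J C X Y Z
  have h2 := tt_antisym C X Y Z
  have h3 : (tA : A) + tA + tA = 1 := tA_three
  have h4 : tt C X Y Z = Dm C X (al C Y) Z - Dm C Y (al C X) Z - om C ⁅X, Y⁆ Z := rfl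
  simp only [mu, nu]
  linear_combination (-(tA : A)) * h1 + (tA : A) * h2 - tt C X Y Z * h3 - h4

lemma mu_xiY (X Z : Vec A) : mu C X C.xi Z = 0 := by
  simp only [mu, nu]
  rw [al_xi, Dm_zero, C.lam_xi, tt_self, tt_xiplug]
  ring

lemma nu_rem (X Y Z : Vec A) :
    nu C X Y Z - nu C X Y C.xi * C.lam Z
      - nu C X Z Y + nu C X Z C.xi * C.lam Y = 0 := by
  simp only [nu]
  rw [tt_xiplug C X Y, tt_xiplug C X Z, tt_xiplug C X C.xi,
    tt_xiplug C Y C.xi, tt_xiplug C Z C.xi]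
  linear_combination ((tA : A) * C.lam X) * uu_symm C Y Z

lemma cc_smulX (f : A) (X Y : Vec A) : ccoef C (f • X) Y = f * ccoef C X Y := by
  simp only [ccoef]
  rw [ap_smul, om_smul_left]; ring

lemma cc_addX (X X' Y : Vec A) :
    ccoef C (X + X') Y = ccoef C X Y + ccoef C X' Y := by
  simp only [ccoef]
  rw [ap_add, om_add_left]; ring

lemma cc_leibY (f : A) (X Y : Vec A) :
    ccoef C X (f • Y) = f * ccoef C X Y + X f * C.lam Y := by
  simp only [ccoef]
  rw [lam_smul, om_smul_right, ap_mul]; ring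

lemma cc_addY (X Y Y' : Vec A) :
    ccoef C X (Y + Y') = ccoef C X Y + ccoef C X Y' := by
  simp only [ccoef]
  rw [lam_add, om_add_right, map_add]; ring

lemma cc_torsion (X Y : Vec A) :
    ccoef C X Y - ccoef C Y X = C.lam ⁅X, Y⁆ := by
  simp only [ccoef]
  rw [om_antisymm C Y X]
  have e : om C X Y = X (C.lam Y) - Y (C.lam X) - C.lam ⁅X, Y⁆ := rfl
  linear_combination (-(1:A)) * e - om C X Y * hA_two (A := A)

lemma cc_xiY (X : Vec A) : ccoef C X C.xi = 0 := by
  simp only [ccoef]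
  rw [C.lam_xi, om_xi_right]
  simp

end CC

/-- On every contact manifold there exists a contact
connection. -/
theorem contactConnection_exists {A : Type*} [CommRing A] [Algebra ℝ A]
    (Cst : ContactAlg A) : Nonempty (ContactConnection Cst) := by
  refine ⟨⟨fun X Y => Cst.sharp (CC.mu Cst X Y) + CC.ccoef Cst X Y • Cst.xi,
    ?_, ?_, ?_, ?_, ?_, ?_, ?_⟩⟩
  · -- add_left
    intro X Y Z
    have hmu : CC.mu Cst (X + Y) Z = fun U => CC.mu Cst X Z U + CC.mu Cst Y Z U :=
      funext fun U => CC.mu_addX Cst X Y Z U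
    rw [hmu, CC.sh_add, CC.cc_addX, add_smul]
    abel
  · -- smul_left
    intro f X Y
    have hmu : CC.mu Cst (f • X) Y = fun U => f * CC.mu Cst X Y U :=
      funext fun U => CC.mu_smulX Cst f X Y U
    rw [hmu, CC.sh_smul, CC.cc_smulX, mul_smul, ← smul_add]
  · -- add_right
    intro X Y Z
    have hmu : CC.mu Cst X (Y + Z) = fun U => CC.mu Cst X Y U + CC.mu Cst X Z U :=
      funext fun U => CC.mu_addY Cst X Y Z U
    rw [hmu, CC.sh_add, CC.cc_addY, add_smul]
    abel
  · -- leibniz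
    intro X f Y
    have hmu : CC.mu Cst X (f • Y)
        = fun U => f * CC.mu Cst X Y U + X f * CC.al Cst Y U :=
      funext fun U => CC.mu_leibY Cst f X Y U
    have hsplit : (fun U => f * CC.mu Cst X Y U + X f * CC.al Cst Y U)
        = fun U => (fun V => f * CC.mu Cst X Y V) U
          + (fun V => X f * CC.al Cst Y V) U := rfl
    rw [hmu, hsplit, CC.sh_add, CC.sh_smul, CC.sh_smul, CC.sharp_al,
      CC.cc_leibY, add_smul, mul_smul, smul_sub, smul_smul]
    rw [smul_add]
    abel
  · -- torsion_free
    intro X Y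
    have h1 : Cst.sharp (CC.mu Cst X Y) + CC.ccoef Cst X Y • Cst.xi
        - (Cst.sharp (CC.mu Cst Y X) + CC.ccoef Cst Y X • Cst.xi)
        = (Cst.sharp (CC.mu Cst X Y) - Cst.sharp (CC.mu Cst Y X))
          + (CC.ccoef Cst X Y - CC.ccoef Cst Y X) • Cst.xi := by
      rw [sub_smul]; abel
    rw [h1, ← CC.sh_sub]
    have hmu : (fun Z => CC.mu Cst X Y Z - CC.mu Cst Y X Z) = CC.al Cst ⁅X, Y⁆ :=
      funext fun Z => CC.mu_torsion Cst X Y Z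
    rw [hmu, CC.sharp_al, CC.cc_torsion]
    abel
  · -- parallel_omega
    intro X Y Z
    show X (CC.om Cst Y Z)
      = CC.om Cst (Cst.sharp (CC.mu Cst X Y) + CC.ccoef Cst X Y • Cst.xi) Z
        + CC.om Cst Y (Cst.sharp (CC.mu Cst X Z) + CC.ccoef Cst X Z • Cst.xi)
    have e1 : CC.om Cst (Cst.sharp (CC.mu Cst X Y) + CC.ccoef Cst X Y • Cst.xi) Z
        = CC.mu Cst X Y Z - CC.mu Cst X Y Cst.xi * Cst.lam Z := by
      rw [CC.om_add_left, CC.om_smul_left, CC.om_xi_left,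
        CC.om_sharp Cst (CC.mu_form Cst X Y)]
      ring
    have e2 : CC.om Cst Y (Cst.sharp (CC.mu Cst X Z) + CC.ccoef Cst X Z • Cst.xi)
        = -(CC.mu Cst X Z Y - CC.mu Cst X Z Cst.xi * Cst.lam Y) := by
      rw [CC.om_antisymm, CC.om_add_left, CC.om_smul_left, CC.om_xi_left,
        CC.om_sharp Cst (CC.mu_form Cst X Z)]
      ring
    rw [e1, e2]
    simp only [CC.mu]
    rw [CC.Dm_xi Cst (CC.al_form Cst Y), CC.Dm_xi Cst (CC.al_form Cst Z)]
    linear_combination (-(1:A)) * CC.Dm_pair Cst X Y Z - CC.nu_rem Cst X Y Z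
  · -- parallel_xi
    intro X
    have hmu : CC.mu Cst X Cst.xi = fun _ => (0 : A) :=
      funext fun Z => CC.mu_xiY Cst X Z
    rw [hmu, CC.sh_zero, CC.cc_xiY, zero_smul, add_zero]
end
end

section
/- The set Con(M,λ) of contact connections on a contact manifold (M,λ) is an affine space modelled on the linear space S^ξ_2(M) ⊕ S^ξ_3(M): for a fixed contact connection ∇, the map sending a contact connection ∇' to the pair (S_{ij}, S_{ijk}) with S = ∇'−∇, S_{ijk} = S_{ij}^l ω_{lk}, S_{ij} = S_{ij}^k λ_k is a bijection from Con(M,λ) onto S^ξ_2(M) ⊕ S^ξ_3(M), with inverse given by S_{ij}^k = S_{ij} ξ^k + S_{ijl} π^{lk}. -/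
/-!
# The affine space of contact connections

Algebraic (Koszul-style) model: a smooth manifold `M` is represented by its
commutative ℝ-algebra `A = C^∞(M)`, vector fields by ℝ-linear derivations of
`A`, covariant tensors by `A`-multilinear maps on vector fields.  See
`ContactAlg` for the encoding of a contact manifold `(M, λ)` with Reeb field
`ξ`, `ω = dλ` and canonical bivector `π` (via its musical map `♯`,
`(♯α)^k = α_l π^{lk}`).

STATEMENT 1: The set `Con(M,λ)` of contact connections on a contact manifold
`(M,λ)` is an affine space modelled on `S^ξ_2(M) ⊕ S^ξ_3(M)`: for a fixed
contact connection `∇`, the map sending a contact connection `∇'` to the pair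
`(S_{ij}, S_{ijk})` with `S = ∇' − ∇`, `S_{ijk} = S_{ij}^l ω_{lk}`,
`S_{ij} = S_{ij}^k λ_k` is a bijection from `Con(M,λ)` onto
`S^ξ_2(M) ⊕ S^ξ_3(M)`, with inverse given by
`S_{ij}^k = S_{ij} ξ^k + S_{ijl} π^{lk}`.
-/
noncomputable section

/-- `T ∈ S^ξ_2(M)`: a fully symmetric, `A`-bilinear, `ξ`-transverse covariant
tensor of rank 2. -/
def IsSymXiTensor2 {A : Type*} [CommRing A] [Algebra ℝ A] (Cst : ContactAlg A)
    (T : Vec A → Vec A → A) : Prop :=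
  (∀ X Y : Vec A, T X Y = T Y X) ∧
  (∀ X X' Y : Vec A, T (X + X') Y = T X Y + T X' Y) ∧
  (∀ (f : A) (X Y : Vec A), T (f • X) Y = f * T X Y) ∧
  (∀ X : Vec A, T Cst.xi X = 0)

/-- `T ∈ S^ξ_3(M)`: a fully symmetric, `A`-trilinear, `ξ`-transverse covariant
tensor of rank 3. -/
def IsSymXiTensor3 {A : Type*} [CommRing A] [Algebra ℝ A] (Cst : ContactAlg A)
    (T : Vec A → Vec A → Vec A → A) : Prop :=
  (∀ X Y Z : Vec A, T X Y Z = T Y X Z) ∧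
  (∀ X Y Z : Vec A, T X Y Z = T X Z Y) ∧
  (∀ X X' Y Z : Vec A, T (X + X') Y Z = T X Y Z + T X' Y Z) ∧
  (∀ (f : A) (X Y Z : Vec A), T (f • X) Y Z = f * T X Y Z) ∧
  (∀ Y Z : Vec A, T Cst.xi Y Z = 0)


section ContactAux

variable {A : Type*} [CommRing A] [Algebra ℝ A]

lemma addmap_zero {α : Vec A → A} (h : ∀ X Y : Vec A, α (X + Y) = α X + α Y) :
    α 0 = 0 := by
  have h0 := h 0 0
  rw [add_zero] at h0
  nth_rewrite 1 [← add_zero (α 0)] at h0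
  exact (add_left_cancel h0).symm

lemma addmap_neg {α : Vec A → A} (h : ∀ X Y : Vec A, α (X + Y) = α X + α Y)
    (X : Vec A) : α (-X) = - α X := by
  have h0 := h X (-X)
  rw [add_neg_cancel, addmap_zero h] at h0
  exact eq_neg_of_add_eq_zero_right h0.symm

lemma addmap_sub {α : Vec A → A} (h : ∀ X Y : Vec A, α (X + Y) = α X + α Y)
    (X Y : Vec A) : α (X - Y) = α X - α Y := by
  rw [sub_eq_add_neg, h, addmap_neg h, sub_eq_add_neg]

lemma oneform_zero {α : Vec A → A} (h : IsOneForm α) : α 0 = 0 := addmap_zero h.1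

lemma bracket_smul_left (f : A) (X Y : Vec A) :
    ⁅f • X, Y⁆ = f • ⁅X, Y⁆ - (Y f) • X := by
  ext g
  simp only [Derivation.commutator_apply, Derivation.sub_apply, Derivation.smul_apply,
    smul_eq_mul, Derivation.leibniz, map_mul]
  ring

variable {lam : Vec A → A}

lemma d1_skew (hl : IsOneForm lam) (X Y : Vec A) : d1 lam X Y = - d1 lam Y X := by
  unfold d1
  have hb : ⁅Y, X⁆ = -⁅X, Y⁆ := by rw [← lie_skew]
  rw [hb, ← neg_one_smul A (⁅X, Y⁆ : Vec A), hl.2]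
  ring

lemma d1_add_left (hl : IsOneForm lam) (X X' Y : Vec A) :
    d1 lam (X + X') Y = d1 lam X Y + d1 lam X' Y := by
  unfold d1
  rw [add_lie, hl.1, hl.1, Derivation.add_apply, map_add]
  ring

lemma d1_smul_left (hl : IsOneForm lam) (f : A) (X Y : Vec A) :
    d1 lam (f • X) Y = f * d1 lam X Y := by
  have h1 : lam (f • ⁅X, Y⁆ - (Y f) • X) = f * lam ⁅X, Y⁆ - (Y f) * lam X := by
    rw [addmap_sub hl.1, hl.2, hl.2]
  unfold d1
  rw [bracket_smul_left, h1, Derivation.smul_apply, hl.2 f X, Derivation.leibniz]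
  simp only [smul_eq_mul]
  ring

lemma d1_zero_left (hl : IsOneForm lam) (Y : Vec A) : d1 lam 0 Y = 0 :=
  addmap_zero (α := fun X => d1 lam X Y) (fun X X' => d1_add_left hl X X' Y)

lemma d1_sub_left (hl : IsOneForm lam) (X X' Y : Vec A) :
    d1 lam (X - X') Y = d1 lam X Y - d1 lam X' Y :=
  addmap_sub (α := fun X => d1 lam X Y) (fun X X' => d1_add_left hl X X' Y) X X'

lemma d1_add_right (hl : IsOneForm lam) (X Y Y' : Vec A) :
    d1 lam X (Y + Y') = d1 lam X Y + d1 lam X Y' := by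
  rw [d1_skew hl, d1_add_left hl, d1_skew hl X Y, d1_skew hl X Y']
  ring

end ContactAux

section ConnAux

variable {A : Type*} [CommRing A] [Algebra ℝ A] {Cst : ContactAlg A}

lemma diff_symm (nab nab' : ContactConnection Cst) (X Y : Vec A) :
    nab'.cov X Y - nab.cov X Y = nab'.cov Y X - nab.cov Y X := by
  have h : nab'.cov X Y - nab'.cov Y X = nab.cov X Y - nab.cov Y X :=
    (nab'.torsion_free X Y).trans (nab.torsion_free X Y).symm
  exact sub_eq_sub_iff_sub_eq_sub.mp h

lemma diff_xi_right (nab nab' : ContactConnection Cst) (X : Vec A) :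
    nab'.cov X Cst.xi - nab.cov X Cst.xi = 0 := by
  rw [nab.parallel_xi, nab'.parallel_xi, sub_zero]

lemma diff_omega (nab nab' : ContactConnection Cst) (X Y Z : Vec A) :
    d1 Cst.lam (nab'.cov X Y - nab.cov X Y) Z
      = d1 Cst.lam (nab'.cov X Z - nab.cov X Z) Y := by
  have hl := Cst.lam_isForm
  have h1 := nab.parallel_omega X Y Z
  have h2 := nab'.parallel_omega X Y Z
  have h3 : d1 Cst.lam (nab'.cov X Y) Z + d1 Cst.lam Y (nab'.cov X Z)
      = d1 Cst.lam (nab.cov X Y) Z + d1 Cst.lam Y (nab.cov X Z) :=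
    h2.symm.trans h1
  rw [d1_sub_left hl, d1_sub_left hl,
    d1_skew hl Y (nab'.cov X Z), d1_skew hl Y (nab.cov X Z)] at *
  linear_combination h3

end ConnAux

/-- Contact connections form an affine space modelled on
`S^ξ_2(M) ⊕ S^ξ_3(M)`.  With `∇` a fixed contact connection, the map
`h_∇ : ∇' ↦ (S_{ij}, S_{ijk}) = (λ_k S^k_{ij}, ω_{lk} S^l_{ij})`, where
`S = ∇' − ∇`, takes values in `S^ξ_2(M) ⊕ S^ξ_3(M)`, is injective, and is
surjective with inverse `S^k_{ij} = S_{ij} ξ^k + S_{ijl} π^{lk}`. -/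
theorem contactConnections_affine_space {A : Type*} [CommRing A] [Algebra ℝ A]
    (Cst : ContactAlg A) (nab : ContactConnection Cst) :
    -- (a) the map `h_∇` is well defined: both components of `h_∇(∇')` are
    --     fully symmetric ξ-transverse tensors
    (∀ nab' : ContactConnection Cst,
      IsSymXiTensor2 Cst (fun X Y => Cst.lam (nab'.cov X Y - nab.cov X Y)) ∧
      IsSymXiTensor3 Cst (fun X Y Z => d1 Cst.lam (nab'.cov X Y - nab.cov X Y) Z))
    -- (b) injectivity of `h_∇`
    ∧ (∀ nab' nab'' : ContactConnection Cst,
        (∀ X Y : Vec A, Cst.lam (nab'.cov X Y - nab.cov X Y)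
          = Cst.lam (nab''.cov X Y - nab.cov X Y)) →
        (∀ X Y Z : Vec A, d1 Cst.lam (nab'.cov X Y - nab.cov X Y) Z
          = d1 Cst.lam (nab''.cov X Y - nab.cov X Y) Z) →
        ∀ X Y : Vec A, nab'.cov X Y = nab''.cov X Y)
    -- (c) surjectivity of `h_∇`, realized by the inverse formula
    --     `S^k_{ij} = S_{ij} ξ^k + S_{ijl} π^{lk}`
    ∧ (∀ (S2 : Vec A → Vec A → A) (S3 : Vec A → Vec A → Vec A → A),
        IsSymXiTensor2 Cst S2 → IsSymXiTensor3 Cst S3 →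
        ∃ nab' : ContactConnection Cst,
          (∀ X Y : Vec A, nab'.cov X Y
            = nab.cov X Y + S2 X Y • Cst.xi + Cst.sharp (fun Z => S3 X Y Z)) ∧
          (∀ X Y : Vec A, Cst.lam (nab'.cov X Y - nab.cov X Y) = S2 X Y) ∧
          (∀ X Y Z : Vec A, d1 Cst.lam (nab'.cov X Y - nab.cov X Y) Z = S3 X Y Z)) := by
  have hl := Cst.lam_isForm
  refine ⟨?_, ?_, ?_⟩
  · -- (a)
    intro nab'
    constructor
    · refine ⟨fun X Y => ?_, fun X X' Y => ?_, fun f X Y => ?_, fun X => ?_⟩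
      all_goals dsimp only
      · rw [diff_symm nab nab' X Y]
      · have h : nab'.cov (X + X') Y - nab.cov (X + X') Y
            = (nab'.cov X Y - nab.cov X Y) + (nab'.cov X' Y - nab.cov X' Y) := by
          rw [nab.add_left, nab'.add_left]; abel
        rw [h, hl.1]
      · have h : nab'.cov (f • X) Y - nab.cov (f • X) Y
            = f • (nab'.cov X Y - nab.cov X Y) := by
          rw [nab.smul_left, nab'.smul_left, smul_sub]
        rw [h, hl.2]
      · rw [diff_symm nab nab' Cst.xi X, diff_xi_right, oneform_zero hl]
    · refine ⟨fun X Y Z => ?_, fun X Y Z => ?_, fun X X' Y Z => ?_,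
        fun f X Y Z => ?_, fun Y Z => ?_⟩
      all_goals dsimp only
      · rw [diff_symm nab nab' X Y]
      · exact diff_omega nab nab' X Y Z
      · have h : nab'.cov (X + X') Y - nab.cov (X + X') Y
            = (nab'.cov X Y - nab.cov X Y) + (nab'.cov X' Y - nab.cov X' Y) := by
          rw [nab.add_left, nab'.add_left]; abel
        rw [h, d1_add_left hl]
      · have h : nab'.cov (f • X) Y - nab.cov (f • X) Y
            = f • (nab'.cov X Y - nab.cov X Y) := by
          rw [nab.smul_left, nab'.smul_left, smul_sub]
        rw [h, d1_smul_left hl]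
      · rw [diff_symm nab nab' Cst.xi Y, diff_xi_right, d1_zero_left hl]
  · -- (b)
    intro nab' nab'' h2 h3 X Y
    set D : Vec A := nab'.cov X Y - nab''.cov X Y with hD
    have hDlam : Cst.lam D = 0 := by
      have h : Cst.lam ((nab'.cov X Y - nab.cov X Y) - (nab''.cov X Y - nab.cov X Y))
          = 0 := by
        rw [addmap_sub hl.1, h2 X Y, sub_self]
      rwa [sub_sub_sub_cancel_right] at h
    have hDom : ∀ W : Vec A, d1 Cst.lam D W = 0 := by
      intro W
      have h : d1 Cst.lam
          ((nab'.cov X Y - nab.cov X Y) - (nab''.cov X Y - nab.cov X Y)) W = 0 := by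
        rw [d1_sub_left hl, h3 X Y W, sub_self]
      rwa [sub_sub_sub_cancel_right] at h
    have hDf : ∀ f : A, D f = 0 := by
      intro f
      have hf : IsOneForm (dF f) :=
        ⟨fun X Y => by simp [dF], fun g X => by
          simp [dF, Derivation.smul_apply, smul_eq_mul]⟩
      have h := Cst.sharp_omega (dF f) hf D
      rw [d1_skew hl, hDom, neg_zero, hDlam, mul_zero, sub_zero] at h
      exact h.symm
    have hD0 : D = 0 := Derivation.ext hDf
    exact sub_eq_zero.mp hD0
  · -- (c)
    intro S2 S3 hS2 hS3
    obtain ⟨s2symm, s2add, s2smul, s2xi⟩ := hS2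
    obtain ⟨s12, s23, s3add, s3smul, s3xi⟩ := hS3
    have rot : ∀ X Y Z : Vec A, S3 X Y Z = S3 Z X Y :=
      fun X Y Z => (s23 X Y Z).trans (s12 X Z Y)
    have s3xi3 : ∀ X Y : Vec A, S3 X Y Cst.xi = 0 := by
      intro X Y; rw [rot]; exact s3xi X Y
    have s3xi2 : ∀ X Z : Vec A, S3 X Cst.xi Z = 0 := by
      intro X Z; rw [s12]; exact s3xi X Z
    have s3form : ∀ X Y : Vec A, IsOneForm (fun Z => S3 X Y Z) := by
      intro X Y
      constructor
      · intro Z Z'; dsimp only; rw [rot X Y (Z + Z'), s3add, ← rot X Y Z, ← rot X Y Z']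
      · intro f Z; dsimp only; rw [rot X Y (f • Z), s3smul, ← rot X Y Z]
    set T : Vec A → Vec A → Vec A :=
      fun X Y => S2 X Y • Cst.xi + Cst.sharp (fun Z => S3 X Y Z) with hT
    have sharp_zero : Cst.sharp (fun _ => (0 : A)) = 0 := by
      have h := Cst.sharp_smul 0 Cst.lam
      simpa using h
    have lamsharp : ∀ X Y : Vec A, Cst.lam (Cst.sharp (fun Z => S3 X Y Z)) = 0 := by
      intro X Y
      rw [Cst.sharp_skew (fun Z => S3 X Y Z) Cst.lam (s3form X Y) hl, Cst.sharp_lam,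
        oneform_zero (s3form X Y), neg_zero]
    have lamT : ∀ X Y : Vec A, Cst.lam (T X Y) = S2 X Y := by
      intro X Y
      simp only [hT]
      rw [hl.1, hl.2, Cst.lam_xi, mul_one, lamsharp, add_zero]
    have omT : ∀ X Y Z : Vec A, d1 Cst.lam (T X Y) Z = S3 X Y Z := by
      intro X Y Z
      simp only [hT]
      rw [d1_add_left hl, d1_smul_left hl, Cst.reeb, mul_zero,
        Cst.sharp_omega _ (s3form X Y) Z, s3xi3, zero_mul, sub_zero, zero_add]
    have Txi : ∀ X : Vec A, T X Cst.xi = 0 := by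
      intro X
      have hz : (fun Z => S3 X Cst.xi Z) = fun _ => (0 : A) := funext (s3xi2 X)
      simp only [hT]
      rw [hz, sharp_zero, s2symm, s2xi, zero_smul, add_zero]
    have Tsymm : ∀ X Y : Vec A, T X Y = T Y X := by
      intro X Y
      have hf : (fun Z => S3 X Y Z) = fun Z => S3 Y X Z := funext fun Z => s12 X Y Z
      simp only [hT]
      rw [s2symm, hf]
    have Tadd : ∀ X X' Y : Vec A, T (X + X') Y = T X Y + T X' Y := by
      intro X X' Y
      have hf : (fun Z => S3 (X + X') Y Z) = fun Z => S3 X Y Z + S3 X' Y Z :=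
        funext fun Z => s3add X X' Y Z
      simp only [hT]
      rw [s2add, hf, Cst.sharp_add, add_smul]
      abel
    have Tsmul : ∀ (f : A) (X Y : Vec A), T (f • X) Y = f • T X Y := by
      intro f X Y
      have hf : (fun Z => S3 (f • X) Y Z) = fun Z => f * S3 X Y Z :=
        funext fun Z => s3smul f X Y Z
      simp only [hT]
      rw [s2smul, hf, Cst.sharp_smul, mul_smul, smul_add]
    have Taddr : ∀ X Y Y' : Vec A, T X (Y + Y') = T X Y + T X Y' := by
      intro X Y Y'
      rw [Tsymm, Tadd, Tsymm Y X, Tsymm Y' X]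
    have Tsmulr : ∀ (f : A) (X Y : Vec A), T X (f • Y) = f • T X Y := by
      intro f X Y
      rw [Tsymm, Tsmul, Tsymm Y X]
    refine ⟨{ cov := fun X Y => nab.cov X Y + T X Y
              add_left := ?_
              smul_left := ?_
              add_right := ?_
              leibniz := ?_
              torsion_free := ?_
              parallel_omega := ?_
              parallel_xi := ?_ }, ?_, ?_, ?_⟩
    · intro X Y Z
      rw [nab.add_left, Tadd]
      abel
    · intro f X Y
      rw [nab.smul_left, Tsmul]
      exact (smul_add f (nab.cov X Y) (T X Y)).symm
    · intro X Y Z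
      rw [nab.add_right, Taddr]
      abel
    · intro X f Y
      rw [nab.leibniz, Tsmulr, smul_add f (nab.cov X Y) (T X Y)]
      abel
    · intro X Y
      rw [Tsymm Y X, add_sub_add_right_eq_sub, nab.torsion_free]
    · intro X Y Z
      rw [d1_add_left hl, d1_add_right hl, omT]
      have h4 : d1 Cst.lam Y (T X Z) = - S3 X Z Y := by
        rw [d1_skew hl, omT]
      rw [h4]
      linear_combination nab.parallel_omega X Y Z - s23 X Y Z
    · intro X
      rw [nab.parallel_xi, Txi, add_zero]
    · intro X Y
      dsimp only
      simp only [hT]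
      rw [add_assoc]
    · intro X Y
      dsimp only
      rw [add_sub_cancel_left, lamT]
    · intro X Y Z
      dsimp only
      rw [add_sub_cancel_left, omT]
end
end

section
/- On a contact manifold (M,λ), the canonical bivector π and the Reeb field ξ satisfy the Jacobi-manifold relations for the Schouten–Nijenhuis bracket: [π,π] = 2 π∧ξ and [ξ,π] = 0. -/
/-!
# The canonical bivector and Reeb field of a contact manifold form a Jacobi structure

Algebraic (Koszul-style) model: a manifold is represented by its commutative
ℝ-algebra `A = C^∞(M)`, vector fields by ℝ-linear derivations.  See
`ContactAlg` for the encoding of a contact manifold `(M, λ)` with Reeb field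
`ξ`, `ω = dλ` and canonical bivector `π` (via its musical map `♯`, so that
`π(α, β) = β(♯α)`).

STATEMENT 2: On a contact manifold `(M,λ)`, the canonical bivector `π` and the
Reeb field `ξ` satisfy the Jacobi-manifold relations for the Schouten–Nijenhuis
bracket: `[π,π] = 2 π∧ξ` and `[ξ,π] = 0`.

These identities of polyvector fields are stated in their standard equivalent
form, obtained by evaluating on exact one-forms `df, dg, dh` (which determine a
polyvector field): with `{f,g}₀ := π(df, dg)`,
* `½[π,π](df,dg,dh) = {f,{g,h}₀}₀ + {g,{h,f}₀}₀ + {h,{f,g}₀}₀`, while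
  `(π∧ξ)(df,dg,dh) = {f,g}₀ ξh + {g,h}₀ ξf + {h,f}₀ ξg`, so `[π,π] = 2π∧ξ`
  becomes the first identity below;
* `[ξ,π] = L_ξ π = 0` evaluated on `(df, dg)` becomes the second identity.
-/
noncomputable section

/-- The canonical bivector `π`, as a pairing of one-forms: `π(α,β) = β(♯α)`. -/
def ContactAlg.biv {A : Type*} [CommRing A] [Algebra ℝ A] (Cst : ContactAlg A)
    (α β : Vec A → A) : A := β (Cst.sharp α)

namespace CAux

variable {A : Type*} [CommRing A] [Algebra ℝ A]

lemma dF_form (f : A) : IsOneForm (dF (A := A) f) := by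
  constructor <;> intros <;> simp [dF]

lemma lam_zero {lam : Vec A → A} (h : IsOneForm lam) : lam 0 = 0 := by
  have := h.1 0 0; simpa using this.symm

lemma lam_neg {lam : Vec A → A} (h : IsOneForm lam) (X : Vec A) : lam (-X) = - lam X := by
  have h2 := h.1 X (-X)
  simp only [add_neg_cancel] at h2
  rw [lam_zero h] at h2
  linear_combination -h2

lemma d1_skew {lam : Vec A → A} (h : IsOneForm lam) (X Y : Vec A) :
    d1 lam X Y = - d1 lam Y X := by
  unfold d1
  rw [show ⁅Y, X⁆ = -⁅X, Y⁆ from (lie_skew Y X).symm, lam_neg h]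
  ring

lemma jac_sum {lam : Vec A → A} (h : IsOneForm lam) (X Y Z : Vec A) :
    lam ⁅⁅X, Y⁆, Z⁆ + lam ⁅⁅Y, Z⁆, X⁆ + lam ⁅⁅Z, X⁆, Y⁆ = 0 := by
  have e1 : ⁅⁅X, Y⁆, Z⁆ = -⁅Z, ⁅X, Y⁆⁆ := by rw [← lie_skew]
  have e2 : ⁅⁅Y, Z⁆, X⁆ = -⁅X, ⁅Y, Z⁆⁆ := by rw [← lie_skew]
  have e3 : ⁅⁅Z, X⁆, Y⁆ = -⁅Y, ⁅Z, X⁆⁆ := by rw [← lie_skew]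
  calc lam ⁅⁅X, Y⁆, Z⁆ + lam ⁅⁅Y, Z⁆, X⁆ + lam ⁅⁅Z, X⁆, Y⁆
      = -(lam ⁅Z, ⁅X, Y⁆⁆) + -(lam ⁅X, ⁅Y, Z⁆⁆) + -(lam ⁅Y, ⁅Z, X⁆⁆) := by
        rw [e1, e2, e3, lam_neg h, lam_neg h, lam_neg h]
    _ = -(lam (⁅X, ⁅Y, Z⁆⁆ + ⁅Y, ⁅Z, X⁆⁆ + ⁅Z, ⁅X, Y⁆⁆)) := by rw [h.1, h.1]; ring
    _ = 0 := by rw [lie_jacobi, lam_zero h, neg_zero]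

lemma d2 {lam : Vec A → A} (h : IsOneForm lam) (X Y Z : Vec A) :
    X (d1 lam Y Z) + Y (d1 lam Z X) + Z (d1 lam X Y)
      = d1 lam ⁅X, Y⁆ Z + d1 lam ⁅Y, Z⁆ X + d1 lam ⁅Z, X⁆ Y := by
  have hj := jac_sum h X Y Z
  simp only [d1, map_sub, Derivation.commutator_apply]
  linear_combination hj



variable {A : Type*} [CommRing A] [Algebra ℝ A] (C : ContactAlg A)

/-- `λ(♯df) = 0`. -/
lemma lam_sharp (f : A) : C.lam (C.sharp (dF f)) = 0 := by
  have := C.sharp_skew (dF f) C.lam (dF_form f) C.lam_isForm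
  rw [C.sharp_lam] at this
  simpa [dF] using this

/-- pointwise skew-symmetry of the bracket. -/
lemma sk (u v : A) : (C.sharp (dF u)) v = -((C.sharp (dF v)) u) := by
  have := C.sharp_skew (dF u) (dF v) (dF_form u) (dF_form v)
  simpa [dF] using this

lemma omega_sharp (u : A) (Y : Vec A) :
    d1 C.lam (C.sharp (dF u)) Y = Y u - C.xi u * C.lam Y := by
  simpa [dF] using C.sharp_omega (dF u) (dF_form u) Y

lemma omega_sharp' (u : A) (W : Vec A) :
    d1 C.lam W (C.sharp (dF u)) = C.xi u * C.lam W - W u := by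
  rw [d1_skew C.lam_isForm, omega_sharp]; ring

/-- `ω(♯du, ♯dv) = (♯dv) u`. -/
lemma omega_sharp_sharp (u v : A) :
    d1 C.lam (C.sharp (dF u)) (C.sharp (dF v)) = (C.sharp (dF v)) u := by
  rw [omega_sharp, lam_sharp, mul_zero, sub_zero]

/-- `λ⁅♯du, ♯dv⁆ = -(♯dv) u`. -/
lemma lam_br (u v : A) :
    C.lam ⁅C.sharp (dF u), C.sharp (dF v)⁆ = -((C.sharp (dF v)) u) := by
  have h := omega_sharp_sharp C u v
  unfold d1 at h
  rw [lam_sharp, lam_sharp, map_zero, map_zero] at h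
  linear_combination -h

/-- `λ⁅ξ, X⁆ = ξ(λX)`. -/
lemma lam_br_xi (X : Vec A) : C.lam ⁅C.xi, X⁆ = C.xi (C.lam X) := by
  have h := C.reeb X
  unfold d1 at h
  rw [C.lam_xi, Derivation.map_one_eq_zero] at h
  linear_combination -h

end CAux

/-- `[π,π] = 2 π∧ξ` and `[ξ,π] = 0` (Schouten–Nijenhuis
brackets), i.e. `(M, π, ξ)` is a Jacobi manifold. -/
theorem jacobi_structure_relations {A : Type*} [CommRing A] [Algebra ℝ A]
    (Cst : ContactAlg A) :
    -- `[π,π] = 2 π∧ξ`, evaluated on exact one-forms `df, dg, dh`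
    (∀ f g h : A,
      Cst.biv (dF f) (dF (Cst.biv (dF g) (dF h)))
        + Cst.biv (dF g) (dF (Cst.biv (dF h) (dF f)))
        + Cst.biv (dF h) (dF (Cst.biv (dF f) (dF g)))
      = Cst.biv (dF f) (dF g) * Cst.xi h
        + Cst.biv (dF g) (dF h) * Cst.xi f
        + Cst.biv (dF h) (dF f) * Cst.xi g)
    -- `[ξ,π] = L_ξ π = 0`, evaluated on exact one-forms `df, dg`
    ∧ (∀ f g : A,
      Cst.xi (Cst.biv (dF f) (dF g))
        = Cst.biv (dF (Cst.xi f)) (dF g) + Cst.biv (dF f) (dF (Cst.xi g))) := by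
  classical
  constructor
  · intro f g h
    have hE := CAux.d2 Cst.lam_isForm (Cst.sharp (dF f)) (Cst.sharp (dF g)) (Cst.sharp (dF h))
    -- the three ω-values on Hamiltonian fields
    rw [CAux.omega_sharp_sharp Cst g h, CAux.omega_sharp_sharp Cst h f,
        CAux.omega_sharp_sharp Cst f g,
        CAux.omega_sharp' Cst h, CAux.omega_sharp' Cst f, CAux.omega_sharp' Cst g,
        CAux.lam_br Cst f g, CAux.lam_br Cst g h, CAux.lam_br Cst h f,
        Derivation.commutator_apply, Derivation.commutator_apply,
        Derivation.commutator_apply] at hE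
    have s1 : (Cst.sharp (dF h)) g = -((Cst.sharp (dF g)) h) := CAux.sk Cst h g
    have s2 : (Cst.sharp (dF f)) h = -((Cst.sharp (dF h)) f) := CAux.sk Cst f h
    have s3 : (Cst.sharp (dF g)) f = -((Cst.sharp (dF f)) g) := CAux.sk Cst g f
    simp only [ContactAlg.biv, dF]
    linear_combination hE - Cst.xi h * s3 - Cst.xi f * s1 - Cst.xi g * s2
  · intro f g
    have hE := CAux.d2 Cst.lam_isForm Cst.xi (Cst.sharp (dF f)) (Cst.sharp (dF g))
    have h1 : d1 Cst.lam (Cst.sharp (dF f)) (Cst.sharp (dF g))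
        = (Cst.sharp (dF g)) f := CAux.omega_sharp_sharp Cst f g
    have h2 : d1 Cst.lam (Cst.sharp (dF g)) Cst.xi = 0 := by
      rw [CAux.omega_sharp, Cst.lam_xi]; ring
    have h3 : d1 Cst.lam Cst.xi (Cst.sharp (dF f)) = 0 := Cst.reeb _
    have h4 : d1 Cst.lam ⁅Cst.xi, Cst.sharp (dF f)⁆ (Cst.sharp (dF g))
        = Cst.xi g * Cst.lam ⁅Cst.xi, Cst.sharp (dF f)⁆
          - ⁅Cst.xi, Cst.sharp (dF f)⁆ g := CAux.omega_sharp' Cst g _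
    have h5 : d1 Cst.lam ⁅Cst.sharp (dF f), Cst.sharp (dF g)⁆ Cst.xi = 0 := by
      rw [CAux.d1_skew Cst.lam_isForm, Cst.reeb, neg_zero]
    have h6 : d1 Cst.lam ⁅Cst.sharp (dF g), Cst.xi⁆ (Cst.sharp (dF f))
        = Cst.xi f * Cst.lam ⁅Cst.sharp (dF g), Cst.xi⁆
          - ⁅Cst.sharp (dF g), Cst.xi⁆ f := CAux.omega_sharp' Cst f _
    have hb1 : Cst.lam ⁅Cst.xi, Cst.sharp (dF f)⁆ = 0 := by
      rw [CAux.lam_br_xi, CAux.lam_sharp, map_zero]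
    have hb2 : Cst.lam ⁅Cst.sharp (dF g), Cst.xi⁆ = 0 := by
      rw [show ⁅Cst.sharp (dF g), Cst.xi⁆ = -⁅Cst.xi, Cst.sharp (dF g)⁆ from
        (lie_skew _ _).symm, CAux.lam_neg Cst.lam_isForm, CAux.lam_br_xi,
        CAux.lam_sharp, map_zero, neg_zero]
    rw [h1, h2, h3, h4, h5, h6, hb1, hb2, Derivation.commutator_apply,
        Derivation.commutator_apply, map_zero, map_zero] at hE
    have s1 : (Cst.sharp (dF g)) f = -((Cst.sharp (dF f)) g) := CAux.sk Cst g f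
    have s2 : (Cst.sharp (dF (Cst.xi f))) g = -((Cst.sharp (dF g)) (Cst.xi f)) :=
      CAux.sk Cst (Cst.xi f) g
    simp only [ContactAlg.biv, dF]
    linear_combination hE - s2
end
end

section
/- Let D be a Fedosov connection on a contact manifold (M,λ). For every a ∈ 𝒲, the equation b = a + δ⁻¹(D+δ)b has a unique solution b ∈ 𝒲, and this solution satisfies Pb = Pa. -/
/-!
# The fixed-point lemma for the quantum lift (Lemma 4.3)

Abstract interface for the completed Weyl algebra `𝒲` of a contact manifold
`(M, λ)`: `W` is an associative ℝ-algebra, filtered by the descending,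
separated and complete filtration `Filt k = F^k𝒲` by `y`-degree.  `δ` is the
differential `δa = dx^i ∧ ∂a/∂y^i`, `δ⁻¹` the homotopy operator and `P` the
projection in the Hodge–de Rham type decomposition
`a = (δδ⁻¹ + δ⁻¹δ)a + Pa` (with `Pa = a(ν,x,0,0) + λ(i_ξa)(ν,x,0,0)`, so that
`P ∘ δ⁻¹ = 0`: the image of `δ⁻¹` contains only positive powers of `y`).
`D = −δ + ∇ + (1/ν)[r,·]` is a Fedosov connection; the operator
`δ⁻¹ ∘ (D + δ)` raises the `y`-degree by 1.

STATEMENT 15: Let `D` be a Fedosov connection on a contact manifold `(M,λ)`.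
For every `a ∈ 𝒲`, the equation `b = a + δ⁻¹(D+δ)b` has a unique solution
`b ∈ 𝒲`, and this solution satisfies `Pb = Pa`.
-/

theorem fixed_point_lemma
    {W : Type*} [Ring W] [Algebra ℝ W]
    -- the filtration `F^k𝒲`: descending, exhaustive, separated, complete
    (Filt : ℕ → Submodule ℝ W)
    (hFilt_desc : ∀ k : ℕ, Filt (k + 1) ≤ Filt k)
    (hFilt_top : Filt 0 = ⊤)
    (hFilt_sep : ∀ a : W, (∀ k : ℕ, a ∈ Filt k) → a = 0)
    (hFilt_complete : ∀ s : ℕ → W, (∀ k : ℕ, s (k + 1) - s k ∈ Filt k) →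
      ∃ x : W, ∀ k : ℕ, x - s k ∈ Filt k)
    -- `δ`, `δ⁻¹`, the projection `P`, and the Fedosov connection `D`
    (delta deltaInv Pp Dconn : W →ₗ[ℝ] W)
    -- the Hodge–de Rham type decomposition `a = (δδ⁻¹ + δ⁻¹δ)a + Pa`
    (hhodge : ∀ a : W, a = delta (deltaInv a) + deltaInv (delta a) + Pp a)
    -- `P ∘ δ⁻¹ = 0`: `δ⁻¹` produces only positive powers of `y`
    (hP_deltaInv : ∀ a : W, Pp (deltaInv a) = 0)
    -- `δ⁻¹(D + δ)` raises the `y`-degree by one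
    (hraise : ∀ (k : ℕ) (a : W), a ∈ Filt k →
      deltaInv (Dconn a + delta a) ∈ Filt (k + 1)) :
    ∀ a : W,
      -- the equation `b = a + δ⁻¹((D + δ) b)` has a unique solution `b` …
      (∃! b : W, b = a + deltaInv (Dconn b + delta b))
      -- … and the solution satisfies `Pb = Pa`
      ∧ (∀ b : W, b = a + deltaInv (Dconn b + delta b) → Pp b = Pp a) := by
  intro a
  -- the linear part of the fixed-point map
  set L : W →ₗ[ℝ] W := deltaInv ∘ₗ (Dconn + delta) with hL
  have hLdef : ∀ x : W, L x = deltaInv (Dconn x + delta x) := by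
    intro x; simp [hL]
  have hLraise : ∀ (k : ℕ) (x : W), x ∈ Filt k → L x ∈ Filt (k + 1) := by
    intro k x hx; rw [hLdef]; exact hraise k x hx
  have hmemtop : ∀ x : W, x ∈ Filt 0 := by
    intro x; rw [hFilt_top]; exact Submodule.mem_top
  -- uniqueness part (any two solutions agree)
  have huniq : ∀ b b' : W, b = a + deltaInv (Dconn b + delta b) →
      b' = a + deltaInv (Dconn b' + delta b') → b = b' := by
    intro b b' hb hb'
    have hdiff : b - b' = L (b - b') := by
      rw [map_sub, hLdef, hLdef]
      calc b - b' = (a + deltaInv (Dconn b + delta b))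
            - (a + deltaInv (Dconn b' + delta b')) := by rw [← hb, ← hb']
        _ = deltaInv (Dconn b + delta b) - deltaInv (Dconn b' + delta b') := by
            abel
    have hmem : ∀ k : ℕ, b - b' ∈ Filt k := by
      intro k
      induction k with
      | zero => exact hmemtop _
      | succ n ih => rw [hdiff]; exact hLraise n _ ih
    have := hFilt_sep (b - b') hmem
    linear_combination (norm := module) this
  -- existence: iterate the fixed-point map starting from 0
  let s : ℕ → W := fun n => Nat.rec 0 (fun _ p => a + L p) n
  have hs0 : s 0 = 0 := rfl
  have hsS : ∀ n, s (n + 1) = a + L (s n) := fun n => rfl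
  have hcauchy : ∀ k : ℕ, s (k + 1) - s k ∈ Filt k := by
    intro k
    induction k with
    | zero => exact hmemtop _
    | succ n ih =>
        have : s (n + 2) - s (n + 1) = L (s (n + 1) - s n) := by
          rw [hsS (n+1), hsS n, map_sub]; abel
        rw [this]; exact hLraise n _ ih
  obtain ⟨x, hx⟩ := hFilt_complete s hcauchy
  have hfix : x = a + deltaInv (Dconn x + delta x) := by
    rw [← hLdef]
    have hmem : ∀ k : ℕ, x - (a + L x) ∈ Filt k := by
      intro k
      have h1 : x - s (k + 1) ∈ Filt k := hFilt_desc k (hx (k + 1))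
      have h2 : L (x - s k) ∈ Filt k := hFilt_desc k (hLraise k _ (hx k))
      have heq : x - (a + L x) = (x - s (k + 1)) - L (x - s k) := by
        rw [hsS, map_sub]; abel
      rw [heq]; exact Submodule.sub_mem _ h1 h2
    have := hFilt_sep _ hmem
    linear_combination (norm := module) this
  -- `Pp b = Pp a` for any solution
  have hP : ∀ b : W, b = a + deltaInv (Dconn b + delta b) → Pp b = Pp a := by
    intro b hb
    rw [hb, map_add, hP_deltaInv, add_zero]
  exact ⟨⟨x, hfix, fun y hy => huniq y x hy hfix⟩, hP⟩
end
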